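/- arXiv:1604.07843 — 9 statements merged into one kernel-verified Lean document; each statement's English description precedes it below -/
import Mathlib

section
/- Let n ≥ 1 and r ≥ 1 be integers, and let d_1, …, d_r be integers with d_i ≥ 2 for every i. If the sum ∑_{k ∈ K_{n,r}} ∏_{i=1}^r C(d_i, k_i + 1) equals 0, then r ≤ n − 1. (This is the combinatorial content of Theorem 4.2: by the formula of Proposition 4.4 this sum is the geometric genus p_g of a homogeneous isolated complete intersection singularity of multidegree (d_1,…,d_r) and dimension n, and rationality means p_g = 0.) -/
/-!
Whenever `n ≤ ∑ i, (d i - 1)`, some `k ∈ K_{n,r}` has `k i + 1 ≤ d i` for all `i`, so its summand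
`∏ i, C(d i, k i + 1)` is positive. With all `d i ≥ 2` this happens as soon as
`n ≤ r`, so a vanishing sum forces `r < n`.
-/

open Finset

theorem Fintype.exists_le_sum_eq {ι : Type*} [Fintype ι] (b : ι → ℕ) {n : ℕ}
    (hn : n ≤ ∑ i, b i) : ∃ k ≤ b, ∑ i, k i = n := by
  obtain ⟨g, hgb, hg⟩ :=
    Finsupp.exists_le_degree_eq (Finsupp.equivFunOnFinite.symm b) n
      (by simpa [Finsupp.degree_eq_sum] using hn)
  exact ⟨g, fun i => by simpa using hgb i, by simpa [Finsupp.degree_eq_sum] using hg⟩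

theorem sum_antidiagonalTuple_prod_choose_pos {r n : ℕ} (d : Fin r → ℕ) (hd : ∀ i, 1 ≤ d i)
    (hn : n ≤ ∑ i, (d i - 1)) :
    0 < ∑ k ∈ Nat.antidiagonalTuple r n, ∏ i, (d i).choose (k i + 1) := by
  obtain ⟨k, hkd, hk⟩ := Fintype.exists_le_sum_eq (fun i => d i - 1) hn
  have hk_mem : k ∈ Nat.antidiagonalTuple r n := Nat.mem_antidiagonalTuple.mpr hk
  have hk_pos : 0 < ∏ i, (d i).choose (k i + 1) :=
    prod_pos fun i _ => Nat.choose_pos (by have : k i ≤ d i - 1 := hkd i; have := hd i; omega)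
  exact hk_pos.trans_le <|
    single_le_sum (f := fun k : Fin r → ℕ => ∏ i, (d i).choose (k i + 1)) (by simp) hk_mem

theorem homogeneous_icis_rational_codim_bound_general (n r : ℕ)
    (d : Fin r → ℕ) (hd : ∀ i, 2 ≤ d i)
    (h : ∑ k ∈ Finset.Nat.antidiagonalTuple r n, ∏ i, Nat.choose (d i) (k i + 1) = 0) :
    r ≤ n - 1 := by
  by_contra hrn
  have hn : n ≤ ∑ i, (d i - 1) :=
    calc n ≤ ∑ _ : Fin r, 1 := by simpa using (by omega : n ≤ r)
      _ ≤ ∑ i, (d i - 1) := sum_le_sum fun i _ => by have := hd i; omega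
  exact (sum_antidiagonalTuple_prod_choose_pos d (fun i => by have := hd i; omega) hn).ne' h

/-- If `n ≥ 1`, `r ≥ 1`, all `d i ≥ 2`, and the sum
`∑_{k ∈ K_{n,r}} ∏_i C(d i, k i + 1)` vanishes, then `r ≤ n - 1`. -/
theorem homogeneous_icis_rational_codim_bound (n r : ℕ) (hn : 1 ≤ n) (hr : 1 ≤ r)
    (d : Fin r → ℕ) (hd : ∀ i, 2 ≤ d i)
    (h : ∑ k ∈ Finset.Nat.antidiagonalTuple r n, ∏ i, Nat.choose (d i) (k i + 1) = 0) :
    r ≤ n - 1 :=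
  homogeneous_icis_rational_codim_bound_general n r d hd h
end

section
/- Let w_1, …, w_5 be positive rational numbers and d_1, d_2 positive rational numbers, and assume that for each j ∈ {1,2} there exists i ∈ {1,…,5} with w_i ≤ d_j. Then ℓ(d_1 + d_2) − ℓ(d_1) − ℓ(d_2) = 0 if and only if w_1 + w_2 + w_3 + w_4 + w_5 > d_1 + d_2. (This is the combinatorial content of Lemma 5.2: by Theorem 5.1 the left-hand side is the geometric genus of a weighted homogeneous ICIS of type (w_1,…,w_5; d_1, d_2) in five variables, and the hypothesis that some w_i ≤ d_j holds because the defining polynomial of degree d_j is nonzero.) -/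
/-- `A(N)`: integer points with all coordinates at least 1 and weighted sum at most `N`. -/
def Aset (w : Fin 5 → ℚ) (N : ℚ) : Set (Fin 5 → ℤ) :=
  {a | (∀ i, 1 ≤ a i) ∧ ∑ i, (a i : ℚ) * w i ≤ N}

/-- `ℓ(N)`: the number of points of `A(N)`. -/
noncomputable def ellA (w : Fin 5 → ℚ) (N : ℚ) : ℕ := (Aset w N).ncard

/-! If `d₁ + d₂ < ∑ w i`, all three sets `A(N)` are empty. Otherwise let `w i₀` be the smallest
weight and `k = ⌊d₁ / w i₀⌋ ≥ 1`. The set `A(d₁)` and the translate `A(d₂) + k eᵢ₀` are disjoint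
subsets of `A(d₁ + d₂)`, since every point of the translate has weighted sum above `d₁`. The
points `1 + t eᵢ₀` with `t < k` lie in neither, and one of them lies in `A(d₁ + d₂) \ A(d₁)`:
their weighted sums `∑ w i + t w i₀` start below `d₁ + d₂`, increase in steps `w i₀ ≤ d₂` and,
as `∑ w i ≥ 2 w i₀`, exceed `d₁` at `t = k - 1`. Hence `ℓ(d₁ + d₂) > ℓ(d₁) + ℓ(d₂)`. -/

theorem exists_le_mem_Ioc_of_add_le {α : Type*} [AddCommMonoid α] [LinearOrder α]
    [IsOrderedAddMonoid α] (f : ℕ → α) {c δ : α} (h₀ : f 0 ≤ c + δ)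
    (hstep : ∀ t, f (t + 1) ≤ f t + δ) :
    ∀ n, c < f n → ∃ t ≤ n, f t ∈ Set.Ioc c (c + δ)
  | 0, hn => ⟨0, le_rfl, hn, h₀⟩
  | n + 1, hn => by
    by_cases hc : c < f n
    · obtain ⟨t, htn, ht⟩ := exists_le_mem_Ioc_of_add_le f h₀ hstep n hc
      exact ⟨t, htn.trans n.le_succ, ht⟩
    · exact ⟨n + 1, le_rfl, hn, (hstep n).trans (by gcongr; exact not_lt.mp hc)⟩

theorem Set.ncard_add_ncard_lt_of_injective {α β : Type*} {S T : Set α} {U : Set β}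
    {f : β → α} (hf : f.Injective) (hT : T.Finite) (hST : S ⊆ T) (hU : f '' U ⊂ T \ S) :
    S.ncard + U.ncard < T.ncard := by
  have hlt := Set.ncard_lt_ncard hU hT.sdiff
  rw [Set.ncard_image_of_injective U hf] at hlt
  have hsplit := Set.ncard_sdiff_add_ncard_of_subset hST hT
  omega

theorem sum_le_sum_intCast_mul_of_one_le {ι : Type*} [Fintype ι] {w : ι → ℚ} (hw : ∀ i, 0 < w i)
    {a : ι → ℤ} (ha : ∀ i, 1 ≤ a i) : ∑ i, w i ≤ ∑ i, (a i : ℚ) * w i :=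
  Finset.sum_le_sum fun i _ ↦ le_mul_of_one_le_left (hw i).le (by exact_mod_cast ha i)

theorem sum_add_single_mul {ι : Type*} [Fintype ι] [DecidableEq ι] (w : ι → ℚ) (a : ι → ℤ)
    (i₀ : ι) (k : ℤ) :
    ∑ i, ((a + Pi.single i₀ k : ι → ℤ) i : ℚ) * w i = ∑ i, (a i : ℚ) * w i + k * w i₀ := by
  simp [add_mul, Finset.sum_add_distrib, Pi.single_apply]

section
variable {w : Fin 5 → ℚ}

theorem Aset_finite (hw : ∀ i, 0 < w i) (N : ℚ) : (Aset w N).Finite := by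
  refine (Set.finite_Icc 1 fun i ↦ ⌊N / w i⌋).subset fun a ⟨ha, hN⟩ ↦ ⟨ha, fun i ↦ ?_⟩
  rw [Int.le_floor, le_div_iff₀ (hw i)]
  refine le_trans ?_ hN
  exact Finset.single_le_sum (f := fun j ↦ (a j : ℚ) * w j)
    (fun j _ ↦ mul_nonneg (by exact_mod_cast (zero_le_one.trans (ha j))) (hw j).le)
    (Finset.mem_univ i)

theorem Aset_mono {N N' : ℚ} (h : N ≤ N') : Aset w N ⊆ Aset w N' :=
  fun _ ⟨ha, hN⟩ ↦ ⟨ha, hN.trans h⟩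

theorem Aset_eq_empty_of_lt_sum (hw : ∀ i, 0 < w i) {N : ℚ} (hN : N < ∑ i, w i) : Aset w N = ∅ :=
  Set.eq_empty_of_forall_notMem fun _ ⟨ha, hsum⟩ ↦
    (hsum.trans_lt hN).not_ge (sum_le_sum_intCast_mul_of_one_le hw ha)

theorem one_mem_Aset : (1 : Fin 5 → ℤ) ∈ Aset w (∑ i, w i) :=
  ⟨fun _ ↦ le_rfl, by simp⟩

theorem add_single_mem_Aset {N : ℚ} {a : Fin 5 → ℤ} (ha : a ∈ Aset w N) (i₀ : Fin 5) {k : ℤ}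
    (hk : 0 ≤ k) : a + Pi.single i₀ k ∈ Aset w (N + k * w i₀) := by
  refine ⟨fun i ↦ (ha.1 i).trans (le_add_of_nonneg_right
    ((Pi.single_nonneg.mpr hk : (0 : Fin 5 → ℤ) ≤ Pi.single i₀ k) i)), ?_⟩
  rw [sum_add_single_mul]
  exact add_le_add_left ha.2 _

theorem notMem_Aset {N : ℚ} {a : Fin 5 → ℤ} (h : N < ∑ i, (a i : ℚ) * w i) : a ∉ Aset w N :=
  fun ha ↦ h.not_ge ha.2

theorem ellA_add_ellA_lt (hw : ∀ i, 0 < w i) {d₁ d₂ : ℚ} {i₀ : Fin 5} (hd₁ : w i₀ ≤ d₁)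
    (hd₂ : w i₀ ≤ d₂) (htwo : 2 * w i₀ ≤ ∑ i, w i) (hle : ∑ i, w i ≤ d₁ + d₂) :
    ellA w d₁ + ellA w d₂ < ellA w (d₁ + d₂) := by
  have hw₀ := hw i₀
  obtain ⟨K, hK⟩ : ∃ K, ⌊d₁ / w i₀⌋₊ = K + 1 :=
    Nat.exists_eq_add_one.mpr (Nat.floor_pos.mpr ((one_le_div hw₀).mpr hd₁))
  have hKle : (K + 1) * w i₀ ≤ d₁ := by
    have := Nat.floor_le (div_nonneg (hw₀.le.trans hd₁) hw₀.le)
    rw [hK, le_div_iff₀ hw₀] at this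
    exact_mod_cast this
  have hKlt : d₁ < (K + 2) * w i₀ := by
    have := Nat.lt_floor_add_one (d₁ / w i₀)
    rw [hK, div_lt_iff₀ hw₀] at this
    push_cast at this
    linarith
  obtain ⟨t, htK, hlo, hhi⟩ := exists_le_mem_Ioc_of_add_le (fun t : ℕ ↦ ∑ i, w i + t * w i₀)
    (c := d₁) (δ := d₂) (by simpa using hle) (fun t ↦ by push_cast; linarith) K
    (by linarith)
  refine Set.ncard_add_ncard_lt_of_injective (f := (· + Pi.single i₀ ((K : ℤ) + 1)))
    (add_left_injective _) (Aset_finite hw _) (Aset_mono (by linarith)) ?_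
  have hshift : (· + Pi.single i₀ ((K : ℤ) + 1)) '' Aset w d₂ ⊆ Aset w (d₁ + d₂) \ Aset w d₁ := by
    rintro _ ⟨a, ha, rfl⟩
    refine ⟨Aset_mono ?_ (add_single_mem_Aset ha i₀ (by positivity)), notMem_Aset ?_⟩
    · push_cast; linarith
    · rw [sum_add_single_mul]
      push_cast
      linarith [sum_le_sum_intCast_mul_of_one_le hw ha.1]
  refine (Set.ssubset_iff_of_subset hshift).mpr ⟨1 + Pi.single i₀ (t : ℤ), ⟨?_, ?_⟩, ?_⟩
  · exact Aset_mono hhi (add_single_mem_Aset one_mem_Aset i₀ t.cast_nonneg)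
  · refine notMem_Aset ?_
    rw [sum_add_single_mul]
    simpa using hlo
  · rintro ⟨a, ha, hab⟩
    have := congrFun hab i₀
    simp only [Pi.add_apply, Pi.one_apply, Pi.single_eq_same] at this
    linarith [ha.1 i₀]

end

/-- Lemma 5.2: with all `w i > 0`, `d₁, d₂ > 0`, and for each `j ∈ {1,2}`
some `w i ≤ d_j`, one has `ℓ(d₁+d₂) − ℓ(d₁) − ℓ(d₂) = 0` iff `∑ w i > d₁ + d₂`. -/
theorem rational_iff_weight_sum_gt (w : Fin 5 → ℚ) (d₁ d₂ : ℚ)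
    (hw : ∀ i, 0 < w i) (hd₁ : 0 < d₁) (hd₂ : 0 < d₂)
    (h₁ : ∃ i, w i ≤ d₁) (h₂ : ∃ i, w i ≤ d₂) :
    (ellA w (d₁ + d₂) : ℤ) - (ellA w d₁ : ℤ) - (ellA w d₂ : ℤ) = 0 ↔
      d₁ + d₂ < ∑ i, w i := by
  constructor
  · intro h
    by_contra! hle
    obtain ⟨i₀, hmin⟩ := Finite.exists_min w
    obtain ⟨i, hi⟩ := h₁
    obtain ⟨j, hj⟩ := h₂
    have hfive : Finset.univ.card • w i₀ ≤ ∑ i, w i :=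
      Finset.card_nsmul_le_sum _ _ _ fun i _ ↦ hmin i
    simp only [Finset.card_univ, Fintype.card_fin, nsmul_eq_mul, Nat.cast_ofNat] at hfive
    have := ellA_add_ellA_lt hw ((hmin i).trans hi) ((hmin j).trans hj)
      (by linarith [hw i₀]) hle
    omega
  · intro hlt
    simp [ellA, Aset_eq_empty_of_lt_sum hw, hlt, show d₁ < ∑ i, w i by linarith,
      show d₂ < ∑ i, w i by linarith]
end

section
/- (Lemma 5.3, part (1).) Let f_1, f_2 ∈ ℂ[z_1,…,z_5] with f_1(0) = f_2(0) = 0, and suppose the variety X = {x ∈ ℂ^5 : f_1(x) = f_2(x) = 0} has an isolated singularity at the origin. Then for every i ∈ {1,2,3,4,5}, one of the following holds: (1a) z_i^n appears in f_1 for some n ≥ 1; (1b) z_i^n appears in f_2 for some n ≥ 1; (1c) there exist distinct j, k ∈ {1,2,3,4,5} \ {i} such that z_i^n z_j appears in f_1 for some n ≥ 0 and z_i^m z_k appears in f_2 for some m ≥ 0. -/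
open MvPolynomial

/-- The monomial with exponent vector `m` appears in `f`. -/
def Appears (f : MvPolynomial (Fin 5) ℂ) (m : Fin 5 →₀ ℕ) : Prop :=
  MvPolynomial.coeff m f ≠ 0

/-- `V(f₁, f₂)` has an isolated singularity at the origin: at every nonzero common zero,
some 2×2 minor of the Jacobian matrix is nonzero. -/
def IsolatedSingOrigin (f₁ f₂ : MvPolynomial (Fin 5) ℂ) : Prop :=
  ∀ x : Fin 5 → ℂ, x ≠ 0 → eval x f₁ = 0 → eval x f₂ = 0 →
    ∃ i j : Fin 5,
      eval x (pderiv i f₁) * eval x (pderiv j f₂) -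
        eval x (pderiv j f₁) * eval x (pderiv i f₂) ≠ 0

/-!
If neither `f₁` nor `f₂` contains a pure power of `z i`, then both vanish at the unit vector
`e i`, and so do their derivatives `∂ᵢ f₁`, `∂ᵢ f₂`. Isolatedness gives a nonzero minor of the
Jacobian at `e i`, hence `∂ⱼ f₁ (e i) ≠ 0` and `∂ₖ f₂ (e i) ≠ 0` with `j ≠ k`, both different from
`i`. Since evaluating at `e i` only sees the monomials that are pure powers of `z i`, these give
monomials `z i ^ n * z j` in `f₁` and `z i ^ m * z k` in `f₂`.
-/

namespace MvPolynomial

variable {σ R : Type*} [CommSemiring R] {f : MvPolynomial σ R} {i : σ}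

theorem coeff_single_eq_zero_of_constantCoeff_eq_zero (h₀ : constantCoeff f = 0)
    (h : ∀ n, 1 ≤ n → coeff (Finsupp.single i n) f = 0) (n : ℕ) :
    coeff (Finsupp.single i n) f = 0 := by
  rcases Nat.eq_zero_or_pos n with rfl | hn
  · rwa [Finsupp.single_zero, ← constantCoeff_eq]
  · exact h n hn

theorem coeff_single_pderiv_self_eq_zero (h : ∀ n, coeff (Finsupp.single i n) f = 0) (n : ℕ) :
    coeff (Finsupp.single i n) (pderiv i f) = 0 := by
  rw [coeff_pderiv, ← Finsupp.single_add, h, zero_mul]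

variable [DecidableEq σ]

theorem eval_piSingle_one_eq_zero (h : ∀ n, coeff (Finsupp.single i n) f = 0) :
    eval (Pi.single i 1) f = 0 := by
  rw [eval_eq]
  refine Finset.sum_eq_zero fun d _ => ?_
  by_cases hs : d.support ⊆ {i}
  · rw [Finsupp.support_subset_singleton.mp hs, h, zero_mul]
  · obtain ⟨j, hj, hji⟩ := Finset.not_subset.mp hs
    refine mul_eq_zero_of_right _ (Finset.prod_eq_zero hj ?_)
    rw [Pi.single_eq_of_ne (Finset.notMem_singleton.mp hji)]
    exact zero_pow (Finsupp.mem_support_iff.mp hj)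

theorem exists_coeff_single_ne_zero_of_eval_piSingle_one_ne_zero
    (h : eval (Pi.single i 1) f ≠ 0) : ∃ n, coeff (Finsupp.single i n) f ≠ 0 := by
  contrapose! h
  exact eval_piSingle_one_eq_zero h

theorem exists_coeff_single_add_single_ne_zero_of_eval_pderiv_ne_zero {j : σ}
    (h : eval (Pi.single i 1) (pderiv j f) ≠ 0) :
    ∃ n, coeff (Finsupp.single i n + Finsupp.single j 1) f ≠ 0 := by
  obtain ⟨n, hn⟩ := exists_coeff_single_ne_zero_of_eval_piSingle_one_ne_zero h
  rw [coeff_pderiv] at hn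
  exact ⟨n, left_ne_zero_of_mul hn⟩

end MvPolynomial

theorem exists_ne_of_mul_sub_mul_ne_zero {ι R : Type*} [Ring R] {D₁ D₂ : ι → R} {a b : ι}
    (h : D₁ a * D₂ b - D₁ b * D₂ a ≠ 0) : ∃ j k, j ≠ k ∧ D₁ j ≠ 0 ∧ D₂ k ≠ 0 := by
  have hab : a ≠ b := by
    rintro rfl
    exact h (sub_self _)
  by_cases hpair : D₁ a ≠ 0 ∧ D₂ b ≠ 0
  · exact ⟨a, b, hab, hpair⟩
  · refine ⟨b, a, hab.symm, ?_⟩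
    have hzero : D₁ a * D₂ b = 0 := by
      rcases not_and_or.mp hpair with ha | hb
      · rw [not_not.mp ha, zero_mul]
      · rw [not_not.mp hb, mul_zero]
    rw [hzero, zero_sub, neg_ne_zero] at h
    exact ⟨left_ne_zero_of_mul h, right_ne_zero_of_mul h⟩

/-- Lemma 5.3 (1). -/
theorem icis_monomial_structure_one (f₁ f₂ : MvPolynomial (Fin 5) ℂ)
    (h₀₁ : eval (0 : Fin 5 → ℂ) f₁ = 0) (h₀₂ : eval (0 : Fin 5 → ℂ) f₂ = 0)
    (hiso : IsolatedSingOrigin f₁ f₂) :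
    ∀ i : Fin 5,
      (∃ n : ℕ, 1 ≤ n ∧ Appears f₁ (Finsupp.single i n)) ∨
      (∃ n : ℕ, 1 ≤ n ∧ Appears f₂ (Finsupp.single i n)) ∨
      (∃ j k : Fin 5, j ≠ i ∧ k ≠ i ∧ j ≠ k ∧
        (∃ n : ℕ, Appears f₁ (Finsupp.single i n + Finsupp.single j 1)) ∧
        (∃ m : ℕ, Appears f₂ (Finsupp.single i m + Finsupp.single k 1))) := by
  intro i
  refine or_iff_not_imp_left.2 fun h₁ => or_iff_not_imp_left.2 fun h₂ => ?_
  simp only [Appears, not_exists, not_and, not_not] at h₁ h₂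
  rw [eval_zero] at h₀₁ h₀₂
  have hc₁ := coeff_single_eq_zero_of_constantCoeff_eq_zero h₀₁ h₁
  have hc₂ := coeff_single_eq_zero_of_constantCoeff_eq_zero h₀₂ h₂
  obtain ⟨a, b, hminor⟩ := hiso (Pi.single i 1) (Pi.single_ne_zero_iff.2 one_ne_zero)
    (eval_piSingle_one_eq_zero hc₁) (eval_piSingle_one_eq_zero hc₂)
  obtain ⟨j, k, hjk, hj, hk⟩ := exists_ne_of_mul_sub_mul_ne_zero
    (D₁ := fun j => eval (Pi.single i 1) (pderiv j f₁))
    (D₂ := fun j => eval (Pi.single i 1) (pderiv j f₂)) hminor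
  have hji : j ≠ i := by
    rintro rfl
    exact hj (eval_piSingle_one_eq_zero (coeff_single_pderiv_self_eq_zero hc₁))
  have hki : k ≠ i := by
    rintro rfl
    exact hk (eval_piSingle_one_eq_zero (coeff_single_pderiv_self_eq_zero hc₂))
  exact ⟨j, k, hji, hki, hjk, exists_coeff_single_add_single_ne_zero_of_eval_pderiv_ne_zero hj,
    exists_coeff_single_add_single_ne_zero_of_eval_pderiv_ne_zero hk⟩
end

section
/- (Lemma 5.3, part (2).) Let f_1, f_2 ∈ ℂ[z_1,…,z_5] with f_1(0) = f_2(0) = 0, and suppose the variety X = {x ∈ ℂ^5 : f_1(x) = f_2(x) = 0} has an isolated singularity at the origin. Then for every l ∈ {1,2} and every pair of distinct indices i, j ∈ {1,2,3,4,5}, one of the following holds: (2a) z_i^a z_j^b appears in f_l for some nonnegative integers a, b; (2b) there exists k ∈ {1,2,3,4,5} \ {i,j} such that z_k z_i^a z_j^b appears in f_l for some nonnegative integers a, b. -/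
/-!
If no monomial of `f` has the form (2a) or (2b), then every monomial of `f` has degree at least
two in the variables other than `z_i, z_j`, so `f` and all its partial derivatives lie in the ideal
generated by those variables and hence vanish on the coordinate plane of `z_i, z_j`. Over `ℂ`
the other polynomial `g`, which vanishes at the origin, restricts to a bivariate polynomial with
a zero `(u, v) ≠ 0`; at the corresponding point of `X` the Jacobian row of `f` is zero, so every
`2 × 2` minor vanishes, contradicting the isolated singularity.
-/

open MvPolynomial

open Polynomial in
theorem Polynomial.exists_ne_zero_evalEval_eq_zero {K : Type*} [Field K] [IsAlgClosed K]
    (P : K[X][X]) (h0 : P.evalEval 0 0 = 0) : ∃ u v : K, (u, v) ≠ 0 ∧ P.evalEval u v = 0 := by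
  by_cases hdeg : P.natDegree = 0
  · refine ⟨0, 1, by simp, ?_⟩
    rw [eq_C_of_natDegree_eq_zero hdeg] at h0 ⊢
    simpa [evalEval_C] using h0
  · -- the factor `u` forces `u ≠ 0`, so the root found below is not the origin
    obtain ⟨u, hu⟩ : ∃ u : K, u * P.leadingCoeff.eval u ≠ 0 := by
      by_contra! h
      have : X * P.leadingCoeff = 0 := Polynomial.funext (by simpa using h)
      simp_all [X_ne_zero]
    have hdegQ : 0 < (P.map (evalRingHom u)).degree := by
      have hcoeff : (P.map (evalRingHom u)).coeff P.natDegree ≠ 0 := by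
        simpa [coeff_map] using right_ne_zero_of_mul hu
      exact lt_of_lt_of_le (by exact_mod_cast Nat.pos_of_ne_zero hdeg)
        (le_degree_of_ne_zero hcoeff)
    obtain ⟨v, hv⟩ := IsAlgClosed.exists_root _ hdegQ.ne'
    exact ⟨u, v, by simp [left_ne_zero_of_mul hu], by rwa [← map_evalRingHom_eval]⟩


theorem Finsupp.eq_single_add_single_of_apply_eq_zero {σ M : Type*} [AddZeroClass M]
    {m : σ →₀ M} {i j : σ} (hij : i ≠ j) (h : ∀ l, l ≠ i → l ≠ j → m l = 0) :
    m = single i (m i) + single j (m j) := by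
  ext l
  by_cases hi : l = i
  · simp [hi, hij]
  by_cases hj : l = j
  · simp [hj, hij.symm]
  simp [h l hi hj, Ne.symm hi, Ne.symm hj]

namespace MvPolynomial

variable {σ : Type*}

section CoordinatePlane

variable {K : Type*} [Field K] [DecidableEq σ]

/-- `X i` becomes the inner variable, `X j` the outer one, and all other variables vanish. -/
noncomputable def restrictPlane (i j : σ) :
    MvPolynomial σ K →ₐ[K] Polynomial (Polynomial K) :=
  aeval (Pi.single i (Polynomial.C Polynomial.X) + Pi.single j Polynomial.X)

theorem eval_single_add_single (i j : σ) (g : MvPolynomial σ K) (u v : K) :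
    eval (Pi.single i u + Pi.single j v) g = (restrictPlane i j g).evalEval u v := by
  rw [← Polynomial.coe_evalEvalRingHom, restrictPlane, aeval_def, eval, coe_eval₂Hom,
    eval₂_comp_left]
  congr 1
  · ext; simp
  · ext l
    simp only [Function.comp_apply, Pi.add_apply, Pi.single_apply]
    split_ifs <;> simp

theorem exists_ne_zero_eval_eq_zero_of_apply_eq_zero [IsAlgClosed K] {i j : σ} (hij : i ≠ j)
    (g : MvPolynomial σ K) (hg : eval 0 g = 0) :
    ∃ x : σ → K, x ≠ 0 ∧ (∀ l, l ≠ i → l ≠ j → x l = 0) ∧ eval x g = 0 := by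
  obtain ⟨u, v, huv, hg'⟩ := (restrictPlane i j g).exists_ne_zero_evalEval_eq_zero
    (by simpa [← eval_single_add_single] using hg)
  refine ⟨Pi.single i u + Pi.single j v, ?_, fun l hi hj => by simp [hi, hj], by
    rwa [eval_single_add_single]⟩
  contrapose! huv
  have hxi := congrFun huv i
  have hxj := congrFun huv j
  simp_all

end CoordinatePlane

variable {R : Type*} [CommSemiring R]

theorem eval_eq_zero_of_mem_span_X {S : Set σ} {p : MvPolynomial σ R}
    (hp : p ∈ Ideal.span (X '' S)) {x : σ → R} (hx : ∀ l ∈ S, x l = 0) : eval x p = 0 := by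
  refine (Ideal.span_le (I := RingHom.ker (eval x)) |>.mpr ?_) hp
  rintro _ ⟨l, hl, rfl⟩
  simpa using hx l hl

theorem mem_span_X_of_coeff_single_add_single_eq_zero {p : MvPolynomial σ R} {i j : σ}
    (hij : i ≠ j) (hp : ∀ a b, coeff (Finsupp.single i a + Finsupp.single j b) p = 0) :
    p ∈ Ideal.span (X '' {l | l ≠ i ∧ l ≠ j}) := by
  rw [mem_ideal_span_X_image]
  intro m hm
  by_contra! h
  rw [mem_support_iff, Finsupp.eq_single_add_single_of_apply_eq_zero hij
    fun l hi hj => h l ⟨hi, hj⟩] at hm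
  exact hm (hp _ _)

theorem pderiv_mem_span_X_of_coeff_eq_zero {p : MvPolynomial σ R} {i j : σ} (hij : i ≠ j)
    (h₁ : ∀ a b, coeff (Finsupp.single i a + Finsupp.single j b) p = 0)
    (h₂ : ∀ k, k ≠ i → k ≠ j → ∀ a b,
      coeff (Finsupp.single k 1 + Finsupp.single i a + Finsupp.single j b) p = 0) (k : σ) :
    pderiv k p ∈ Ideal.span (X '' {l | l ≠ i ∧ l ≠ j}) := by
  refine mem_span_X_of_coeff_single_add_single_eq_zero hij fun a b => ?_
  suffices coeff (Finsupp.single i a + Finsupp.single j b + Finsupp.single k 1) p = 0 by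
    simp [coeff_pderiv, this]
  by_cases hki : k = i
  · rw [hki, add_right_comm, ← Finsupp.single_add]
    exact h₁ _ _
  by_cases hkj : k = j
  · rw [hkj, add_assoc, ← Finsupp.single_add]
    exact h₁ _ _
  rw [add_comm, ← add_assoc]
  exact h₂ k hki hkj a b

end MvPolynomial

theorem IsolatedSingOrigin.symm {f₁ f₂ : MvPolynomial (Fin 5) ℂ}
    (h : IsolatedSingOrigin f₁ f₂) : IsolatedSingOrigin f₂ f₁ := by
  intro x hx h₂ h₁
  obtain ⟨i, j, hij⟩ := h x hx h₁ h₂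
  exact ⟨j, i, fun h => hij (by linear_combination h)⟩

theorem IsolatedSingOrigin.monomial_dichotomy_left {f g : MvPolynomial (Fin 5) ℂ}
    (hiso : IsolatedSingOrigin f g) (hg : eval 0 g = 0) {i j : Fin 5} (hij : i ≠ j) :
    (∃ a b : ℕ, Appears f (Finsupp.single i a + Finsupp.single j b)) ∨
      (∃ k : Fin 5, k ≠ i ∧ k ≠ j ∧ ∃ a b : ℕ,
        Appears f (Finsupp.single k 1 + Finsupp.single i a + Finsupp.single j b)) := by
  by_contra! h
  obtain ⟨h₁, h₂⟩ := h
  simp only [Appears, ne_eq, not_not] at h₁ h₂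
  obtain ⟨x, hx, hx_off, hgx⟩ := exists_ne_zero_eval_eq_zero_of_apply_eq_zero hij g hg
  have hx_plane : ∀ l ∈ {l | l ≠ i ∧ l ≠ j}, x l = 0 := fun l hl => hx_off l hl.1 hl.2
  have hfx := eval_eq_zero_of_mem_span_X
    (mem_span_X_of_coeff_single_add_single_eq_zero hij h₁) hx_plane
  have hdfx k := eval_eq_zero_of_mem_span_X
    (pderiv_mem_span_X_of_coeff_eq_zero hij h₁ h₂ k) hx_plane
  obtain ⟨a, b, hab⟩ := hiso x hx hfx hgx
  simp [hdfx] at hab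

/-- Lemma 5.3 (2). -/
theorem icis_monomial_structure_two (f₁ f₂ : MvPolynomial (Fin 5) ℂ)
    (h₀₁ : eval (0 : Fin 5 → ℂ) f₁ = 0) (h₀₂ : eval (0 : Fin 5 → ℂ) f₂ = 0)
    (hiso : IsolatedSingOrigin f₁ f₂) :
    ∀ f ∈ ({f₁, f₂} : Set (MvPolynomial (Fin 5) ℂ)), ∀ i j : Fin 5, i ≠ j →
      (∃ a b : ℕ, Appears f (Finsupp.single i a + Finsupp.single j b)) ∨
      (∃ k : Fin 5, k ≠ i ∧ k ≠ j ∧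
        ∃ a b : ℕ,
          Appears f (Finsupp.single k 1 + Finsupp.single i a + Finsupp.single j b)) := by
  rintro f (rfl | rfl) i j hij
  · exact hiso.monomial_dichotomy_left h₀₂ hij
  · exact hiso.symm.monomial_dichotomy_left h₀₁ hij
end

section
/- (Corollary 5.4, part (1).) Let f_1, f_2 ∈ ℂ[z_1,…,z_5] with f_1(0) = f_2(0) = 0, weighted homogeneous of type (w_1,…,w_5; d_1, d_2), and suppose the variety X = {x ∈ ℂ^5 : f_1(x) = f_2(x) = 0} has an isolated singularity at the origin. Then for every i ∈ {1,2,3,4,5}: d_1 ∈ N(w_i), or d_2 ∈ N(w_i), or there exist distinct j, k ∈ {1,2,3,4,5} \ {i} such that d_1 − w_j ∈ N(w_i) and d_2 − w_k ∈ N(w_i). -/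
open MvPolynomial

/-- `f` is weighted homogeneous of weights `w` and degree `d`: every monomial
appearing in `f` has weighted degree `d`. -/
def WeightedHomog (f : MvPolynomial (Fin 5) ℂ) (w : Fin 5 → ℚ) (d : ℚ) : Prop :=
  ∀ m : Fin 5 →₀ ℕ, MvPolynomial.coeff m f ≠ 0 → ∑ i, (m i : ℚ) * w i = d

/-- `N(a) = {k·a : k ∈ ℕ}`. -/
def Nset1 (a : ℚ) : Set ℚ := {x | ∃ k : ℕ, x = k * a}

/-- `N(a,b) = {k·a + s·b : k, s ∈ ℕ}`. -/
def Nset2 (a b : ℚ) : Set ℚ := {x | ∃ k s : ℕ, x = k * a + s * b}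

/-- `N(a,b,c) = {k·a + s·b + t·c : k, s, t ∈ ℕ}`. -/
def Nset3 (a b c : ℚ) : Set ℚ := {x | ∃ k s t : ℕ, x = k * a + s * b + t * c}

/-!
Evaluate at the coordinate point `x = eᵢ`. A polynomial is nonzero at `eᵢ` only if it contains
a pure power `zᵢᵏ`, so a weighted homogeneous polynomial of degree `d ∉ N(wᵢ)` vanishes there, and
`eᵢ` is a nonzero point of `X`. Isolatedness gives a nonzero minor, i.e. distinct `j, k` with
`∂f₁/∂zⱼ (eᵢ) ≠ 0` and `∂f₂/∂zₖ (eᵢ) ≠ 0`. Since `∂f/∂zⱼ` is weighted homogeneous of degree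
`d - wⱼ`, this forces `d₁ - wⱼ, d₂ - wₖ ∈ N(wᵢ)`, and `j, k ≠ i` because otherwise `d₁` or `d₂`
itself would lie in `N(wᵢ)`.
-/

section PureMonomial

variable {σ R : Type*} [Fintype σ] [DecidableEq σ] [CommSemiring R]

theorem MvPolynomial.exists_coeff_single_ne_zero_of_eval_piSingle_ne_zero
    {g : MvPolynomial σ R} {i : σ} (h : eval (Pi.single i 1) g ≠ 0) :
    ∃ k, coeff (Finsupp.single i k) g ≠ 0 := by
  contrapose! h
  rw [eval_eq']
  refine Finset.sum_eq_zero fun m hm => ?_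
  have hpure : ∃ j, j ≠ i ∧ m j ≠ 0 := by
    by_contra! hm'
    refine mem_support_iff.mp hm ?_
    convert h (m i)
    ext j
    by_cases hj : j = i
    · simp [hj]
    · simp [hm' j hj, Ne.symm hj]
  obtain ⟨j, hji, hmj⟩ := hpure
  refine mul_eq_zero_of_right _ (Finset.prod_eq_zero (Finset.mem_univ j) ?_)
  rw [Pi.single_eq_of_ne hji, zero_pow hmj]

end PureMonomial

theorem ne_zero_and_ne_zero_or_of_mul_sub_mul_ne_zero {R : Type*} [NonUnitalNonAssocRing R]
    {p q r s : R} (h : p * q - r * s ≠ 0) : (p ≠ 0 ∧ q ≠ 0) ∨ (r ≠ 0 ∧ s ≠ 0) := by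
  by_contra! hc
  obtain ⟨hp, hr⟩ := hc
  apply h
  rw [show p * q = 0 by by_cases hp' : p = 0 <;> simp [hp', hp],
    show r * s = 0 by by_cases hr' : r = 0 <;> simp [hr', hr], sub_zero]

theorem sub_mem_Nset1_self {x a : ℚ} (h : x - a ∈ Nset1 a) : x ∈ Nset1 a := by
  obtain ⟨k, hk⟩ := h
  exact ⟨k + 1, by push_cast; linarith⟩

namespace WeightedHomog

variable {f : MvPolynomial (Fin 5) ℂ} {w : Fin 5 → ℚ} {d : ℚ}

theorem pderiv (hf : WeightedHomog f w d) (a : Fin 5) :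
    WeightedHomog (MvPolynomial.pderiv a f) w (d - w a) := by
  intro m hm
  rw [coeff_pderiv] at hm
  have hdeg := hf _ (left_ne_zero_of_mul hm)
  simp only [Finsupp.coe_add, Pi.add_apply, Nat.cast_add, add_mul, Finset.sum_add_distrib,
    Finsupp.single_apply, Nat.cast_ite, Nat.cast_one, Nat.cast_zero, ite_mul, one_mul, zero_mul,
    Finset.sum_ite_eq, Finset.mem_univ, if_true] at hdeg
  linarith

theorem eq_mul_of_coeff_single_ne_zero (hf : WeightedHomog f w d) {i : Fin 5} {k : ℕ}
    (h : coeff (Finsupp.single i k) f ≠ 0) : d = k * w i := by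
  rw [← hf _ h, Finset.sum_eq_single i (fun j _ hj => by simp [Ne.symm hj])
    (by simp)]
  simp

theorem mem_Nset1_of_eval_piSingle_ne_zero (hf : WeightedHomog f w d) {i : Fin 5}
    (h : eval (Pi.single i 1) f ≠ 0) : d ∈ Nset1 (w i) := by
  obtain ⟨k, hk⟩ := exists_coeff_single_ne_zero_of_eval_piSingle_ne_zero h
  exact ⟨k, hf.eq_mul_of_coeff_single_ne_zero hk⟩

theorem eval_piSingle_eq_zero (hf : WeightedHomog f w d) {i : Fin 5} (hd : d ∉ Nset1 (w i)) :
    eval (Pi.single i 1) f = 0 :=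
  not_not.mp (mt hf.mem_Nset1_of_eval_piSingle_ne_zero hd)

theorem ne_and_sub_mem_Nset1_of_eval_pderiv_ne_zero (hf : WeightedHomog f w d) {i a : Fin 5}
    (hd : d ∉ Nset1 (w i)) (h : eval (Pi.single i 1) (MvPolynomial.pderiv a f) ≠ 0) :
    a ≠ i ∧ d - w a ∈ Nset1 (w i) := by
  have hmem := (hf.pderiv a).mem_Nset1_of_eval_piSingle_ne_zero h
  refine ⟨?_, hmem⟩
  rintro rfl
  exact hd (sub_mem_Nset1_self hmem)

end WeightedHomog

theorem IsolatedSingOrigin.exists_pderiv_ne_zero {f₁ f₂ : MvPolynomial (Fin 5) ℂ}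
    (hiso : IsolatedSingOrigin f₁ f₂) {x : Fin 5 → ℂ} (hx : x ≠ 0) (h₁ : eval x f₁ = 0)
    (h₂ : eval x f₂ = 0) :
    ∃ j k, j ≠ k ∧ eval x (pderiv j f₁) ≠ 0 ∧ eval x (pderiv k f₂) ≠ 0 := by
  obtain ⟨a, b, hminor⟩ := hiso x hx h₁ h₂
  have hab : a ≠ b := by
    rintro rfl
    exact hminor (sub_self _)
  rcases ne_zero_and_ne_zero_or_of_mul_sub_mul_ne_zero hminor with ⟨ha, hb⟩ | ⟨hb, ha⟩
  · exact ⟨a, b, hab, ha, hb⟩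
  · exact ⟨b, a, hab.symm, hb, ha⟩

theorem icis_degree_structure_one_general (f₁ f₂ : MvPolynomial (Fin 5) ℂ) (w : Fin 5 → ℚ) (d₁ d₂ : ℚ)
    (hwh₁ : WeightedHomog f₁ w d₁) (hwh₂ : WeightedHomog f₂ w d₂)
    (hiso : IsolatedSingOrigin f₁ f₂) :
    ∀ i : Fin 5,
      d₁ ∈ Nset1 (w i) ∨ d₂ ∈ Nset1 (w i) ∨
      (∃ j k : Fin 5, j ≠ i ∧ k ≠ i ∧ j ≠ k ∧
        d₁ - w j ∈ Nset1 (w i) ∧ d₂ - w k ∈ Nset1 (w i)) := by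
  intro i
  by_cases hd₁ : d₁ ∈ Nset1 (w i)
  · exact .inl hd₁
  by_cases hd₂ : d₂ ∈ Nset1 (w i)
  · exact .inr (.inl hd₂)
  have hx : (Pi.single i 1 : Fin 5 → ℂ) ≠ 0 := by
    simp [Pi.single_eq_zero_iff]
  obtain ⟨j, k, hjk, hj, hk⟩ := hiso.exists_pderiv_ne_zero hx
    (hwh₁.eval_piSingle_eq_zero hd₁) (hwh₂.eval_piSingle_eq_zero hd₂)
  obtain ⟨hji, hdj⟩ := hwh₁.ne_and_sub_mem_Nset1_of_eval_pderiv_ne_zero hd₁ hj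
  obtain ⟨hki, hdk⟩ := hwh₂.ne_and_sub_mem_Nset1_of_eval_pderiv_ne_zero hd₂ hk
  exact .inr (.inr ⟨j, k, hji, hki, hjk, hdj, hdk⟩)

/-- Corollary 5.4 (1). -/
theorem icis_degree_structure_one (f₁ f₂ : MvPolynomial (Fin 5) ℂ) (w : Fin 5 → ℚ) (d₁ d₂ : ℚ)
    (hw : ∀ i, 0 < w i) (hd₁ : 0 < d₁) (hd₂ : 0 < d₂)
    (h₀₁ : eval (0 : Fin 5 → ℂ) f₁ = 0) (h₀₂ : eval (0 : Fin 5 → ℂ) f₂ = 0)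
    (hwh₁ : WeightedHomog f₁ w d₁) (hwh₂ : WeightedHomog f₂ w d₂)
    (hiso : IsolatedSingOrigin f₁ f₂) :
    ∀ i : Fin 5,
      d₁ ∈ Nset1 (w i) ∨ d₂ ∈ Nset1 (w i) ∨
      (∃ j k : Fin 5, j ≠ i ∧ k ≠ i ∧ j ≠ k ∧
        d₁ - w j ∈ Nset1 (w i) ∧ d₂ - w k ∈ Nset1 (w i)) :=
  icis_degree_structure_one_general f₁ f₂ w d₁ d₂ hwh₁ hwh₂ hiso
end

section
/- (Corollary 5.4, part (2).) Let f_1, f_2 ∈ ℂ[z_1,…,z_5] with f_1(0) = f_2(0) = 0, weighted homogeneous of type (w_1,…,w_5; d_1, d_2), and suppose the variety X = {x ∈ ℂ^5 : f_1(x) = f_2(x) = 0} has an isolated singularity at the origin. Then for every pair of distinct indices i, j ∈ {1,2,3,4,5} and every l ∈ {1,2}: d_l ∈ N(w_i, w_j), or there exists k ∈ {1,2,3,4,5} \ {i,j} such that d_l − w_k ∈ N(w_i, w_j). -/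
open MvPolynomial

/-!
If `d_l` lies neither in `N(w_i, w_j)` nor in any `w_k + N(w_i, w_j)` with `k ∉ {i, j}`, then
by weighted homogeneity every monomial of `f_l` has degree at least two in the variables
`z_k`, `k ∉ {i, j}`. Hence `f_l` and all its partial derivatives vanish on the coordinate
plane of `z_i, z_j`. The other polynomial, restricted to this plane, is a polynomial in two
variables vanishing at the origin, so it has a nonzero zero there. At that point both
equations vanish while the row of `f_l` in the Jacobian matrix is zero, contradicting the
isolated singularity.
-/

open scoped Polynomial.Bivariate

namespace Polynomial

theorem exists_ne_zero_evalEval_eq_zero_s11 {K : Type*} [Field K] [IsAlgClosed K]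
    (p : K[X][Y]) (hp : p.evalEval 0 0 = 0) : ∃ x y : K, (x, y) ≠ 0 ∧ p.evalEval x y = 0 := by
  classical
  by_cases hdeg : p.natDegree = 0
  · rw [eq_C_of_natDegree_eq_zero hdeg, evalEval_C] at hp
    exact ⟨0, 1, by simp, by rw [eq_C_of_natDegree_eq_zero hdeg, evalEval_C, hp]⟩
  have hlc : X * p.leadingCoeff ≠ 0 :=
    mul_ne_zero X_ne_zero (leadingCoeff_ne_zero.mpr (by rintro rfl; simp at hdeg))
  -- `x` avoids `0` and the roots of the leading coefficient, so specializing at it keeps the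
  -- degree in `Y`
  obtain ⟨x, hx⟩ := Infinite.exists_notMem_finset (X * p.leadingCoeff).roots.toFinset
  have hx : x * p.leadingCoeff.eval x ≠ 0 := by simpa [hlc] using hx
  have hmap : (p.map (evalRingHom x)).degree ≠ 0 := degree_ne_of_natDegree_ne <| by
    rwa [natDegree_map_of_leadingCoeff_ne_zero _ (right_ne_zero_of_mul hx)]
  obtain ⟨y, hy⟩ := IsAlgClosed.exists_root _ hmap
  exact ⟨x, y, by simp [left_ne_zero_of_mul hx], by rwa [← map_evalRingHom_eval]⟩

end Polynomial

namespace MvPolynomial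

variable {σ : Type*}

theorem exists_ne_zero_eval_eq_zero_on_plane {K : Type*} [Field K] [IsAlgClosed K]
    [DecidableEq σ] {i j : σ} (hij : i ≠ j) (g : MvPolynomial σ K) (hg : eval 0 g = 0) :
    ∃ x : σ → K, x ≠ 0 ∧ (∀ t ∉ ({i, j} : Finset σ), x t = 0) ∧ eval x g = 0 := by
  set φ : MvPolynomial σ K →+* K[X][Y] := eval₂Hom (Polynomial.C.comp Polynomial.C) fun t =>
    if t = i then Polynomial.C Polynomial.X else if t = j then Y else 0
  have hφ (a b : K) : (φ g).evalEval a b = eval (Pi.single i a + Pi.single j b) g := by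
    suffices (Polynomial.evalEvalRingHom a b).comp φ = eval (Pi.single i a + Pi.single j b) from
      congr($this g)
    ext t
    · simp [φ]
    · obtain rfl | hti := eq_or_ne t i
      · simp [φ, hij]
      obtain rfl | htj := eq_or_ne t j
      · simp [φ, hti]
      · simp [φ, hti, htj]
  obtain ⟨a, b, hab, h⟩ := (φ g).exists_ne_zero_evalEval_eq_zero_s11 (by simpa [hφ] using hg)
  refine ⟨Pi.single i a + Pi.single j b, fun h0 => hab ?_, fun t ht => ?_, by rw [← hφ]; exact h⟩
  · simpa [hij, hij.symm] using And.intro (congrFun h0 i) (congrFun h0 j)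
  · obtain ⟨hti, htj⟩ : t ≠ i ∧ t ≠ j := by simpa using ht
    simp [hti, htj]

/-- `f` lies in the `n`-th power of the ideal generated by the variables `X t`, `t ∈ S`. -/
def VanishesToOrder {R : Type*} [CommSemiring R] (S : Finset σ) (n : ℕ)
    (f : MvPolynomial σ R) : Prop :=
  ∀ m ∈ f.support, n ≤ ∑ t ∈ S, m t

variable {R : Type*} [CommSemiring R] {S : Finset σ} {n : ℕ} {f : MvPolynomial σ R}

theorem VanishesToOrder.pderiv [DecidableEq σ] (hf : VanishesToOrder S (n + 1) f) (k : σ) :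
    VanishesToOrder S n (pderiv k f) := by
  intro m hm
  have hle := hf (m + Finsupp.single k 1) <| mem_support_iff.mpr <|
    left_ne_zero_of_mul (by rwa [← coeff_pderiv, ← mem_support_iff])
  simp only [Finsupp.add_apply, Finset.sum_add_distrib, Finsupp.single_apply,
    Finset.sum_ite_eq] at hle
  split_ifs at hle <;> omega

theorem VanishesToOrder.eval_eq_zero (hf : VanishesToOrder S (n + 1) f) {x : σ → R}
    (hx : ∀ t ∈ S, x t = 0) : eval x f = 0 := by
  classical
  rw [eval_eq]
  refine Finset.sum_eq_zero fun m hm => mul_eq_zero_of_right _ ?_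
  obtain ⟨t, htS, hmt⟩ := Finset.exists_ne_zero_of_sum_ne_zero (Nat.ne_zero_of_lt (hf m hm))
  exact Finset.prod_eq_zero (Finsupp.mem_support_iff.mpr hmt) (by rw [hx t htS, zero_pow hmt])

end MvPolynomial

theorem weightSum_mem_nset2_or {σ : Type*} [Fintype σ] [DecidableEq σ] {i j : σ} (hij : i ≠ j)
    (w : σ → ℚ) {m : σ →₀ ℕ} (hm : ∑ t ∈ ({i, j} : Finset σ)ᶜ, m t ≤ 1) :
    ∑ t, (m t : ℚ) * w t ∈ Nset2 (w i) (w j) ∨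
      ∃ k, k ≠ i ∧ k ≠ j ∧ ∑ t, (m t : ℚ) * w t - w k ∈ Nset2 (w i) (w j) := by
  have hsplit : ∑ t, (m t : ℚ) * w t =
      m i * w i + m j * w j + ∑ t ∈ ({i, j} : Finset σ)ᶜ, (m t : ℚ) * w t := by
    rw [← Finset.sum_add_sum_compl {i, j}, Finset.sum_pair hij]
  rcases Nat.le_one_iff_eq_zero_or_eq_one.mp hm with h0 | h1
  · refine Or.inl ⟨m i, m j, ?_⟩
    rw [hsplit, Finset.sum_eq_zero fun t ht => by simp [Finset.sum_eq_zero_iff.mp h0 t ht],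
      add_zero]
  · obtain ⟨k, hk, hmk⟩ := Finset.exists_ne_zero_of_sum_ne_zero (h1 ▸ one_ne_zero)
    rw [← Finset.add_sum_erase _ _ hk] at h1
    have hrest := Finset.sum_eq_zero_iff.mp
      (show ∑ t ∈ ({i, j} : Finset σ)ᶜ.erase k, m t = 0 by omega)
    obtain ⟨hki, hkj⟩ : k ≠ i ∧ k ≠ j := by simpa using hk
    refine Or.inr ⟨k, hki, hkj, m i, m j, ?_⟩
    rw [hsplit, ← Finset.add_sum_erase _ _ hk, show m k = 1 by omega,
      Finset.sum_eq_zero fun t ht => by simp [hrest t ht]]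
    push_cast
    ring

theorem WeightedHomog.vanishesToOrder_two {f : MvPolynomial (Fin 5) ℂ} {w : Fin 5 → ℚ} {d : ℚ}
    (hf : WeightedHomog f w d) {i j : Fin 5} (hij : i ≠ j) (hd : d ∉ Nset2 (w i) (w j))
    (hdk : ∀ k, k ≠ i → k ≠ j → d - w k ∉ Nset2 (w i) (w j)) :
    VanishesToOrder ({i, j}ᶜ) 2 f := by
  intro m hm
  by_contra! hlt
  rw [← hf m (mem_support_iff.mp hm)] at hd hdk
  rcases weightSum_mem_nset2_or hij w (m := m) (by omega) with h | ⟨k, hki, hkj, hk⟩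
  · exact hd h
  · exact hdk k hki hkj hk

namespace IsolatedSingOrigin

variable {f₁ f₂ : MvPolynomial (Fin 5) ℂ}

theorem symm_s11 (h : IsolatedSingOrigin f₁ f₂) : IsolatedSingOrigin f₂ f₁ := fun x hx h₂ h₁ => by
  obtain ⟨a, b, hab⟩ := h x hx h₁ h₂
  exact ⟨b, a, by convert hab using 1; ring⟩

theorem exists_pderiv_ne_zero_s11 (h : IsolatedSingOrigin f₁ f₂) {x : Fin 5 → ℂ} (hx : x ≠ 0)
    (h₁ : eval x f₁ = 0) (h₂ : eval x f₂ = 0) : ∃ k, eval x (pderiv k f₁) ≠ 0 := by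
  obtain ⟨a, b, hab⟩ := h x hx h₁ h₂
  by_contra! hk
  simp [hk] at hab

theorem degree_mem_nset2_or {f g : MvPolynomial (Fin 5) ℂ} {w : Fin 5 → ℚ} {d : ℚ}
    (hiso : IsolatedSingOrigin f g) (hg : eval 0 g = 0) (hf : WeightedHomog f w d)
    {i j : Fin 5} (hij : i ≠ j) :
    d ∈ Nset2 (w i) (w j) ∨ ∃ k, k ≠ i ∧ k ≠ j ∧ d - w k ∈ Nset2 (w i) (w j) := by
  by_contra! h
  have hvan := hf.vanishesToOrder_two hij h.1 h.2
  obtain ⟨x, hx0, hxS, hgx⟩ := exists_ne_zero_eval_eq_zero_on_plane hij g hg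
  have hxS' : ∀ t ∈ ({i, j}ᶜ : Finset (Fin 5)), x t = 0 := fun t ht =>
    hxS t (Finset.mem_compl.mp ht)
  obtain ⟨k, hk⟩ := hiso.exists_pderiv_ne_zero_s11 hx0 (hvan.eval_eq_zero hxS') hgx
  exact hk ((hvan.pderiv k).eval_eq_zero hxS')

end IsolatedSingOrigin

theorem icis_degree_structure_two_general (f₁ f₂ : MvPolynomial (Fin 5) ℂ) (w : Fin 5 → ℚ) (d₁ d₂ : ℚ)
    (h₀₁ : eval (0 : Fin 5 → ℂ) f₁ = 0) (h₀₂ : eval (0 : Fin 5 → ℂ) f₂ = 0)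
    (hwh₁ : WeightedHomog f₁ w d₁) (hwh₂ : WeightedHomog f₂ w d₂)
    (hiso : IsolatedSingOrigin f₁ f₂) :
    ∀ i j : Fin 5, i ≠ j → ∀ d ∈ ({d₁, d₂} : Set ℚ),
      d ∈ Nset2 (w i) (w j) ∨
      (∃ k : Fin 5, k ≠ i ∧ k ≠ j ∧ d - w k ∈ Nset2 (w i) (w j)) := by
  rintro i j hij d (rfl | rfl)
  · exact hiso.degree_mem_nset2_or h₀₂ hwh₁ hij
  · exact hiso.symm_s11.degree_mem_nset2_or h₀₁ hwh₂ hij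

/-- Corollary 5.4 (2). -/
theorem icis_degree_structure_two (f₁ f₂ : MvPolynomial (Fin 5) ℂ) (w : Fin 5 → ℚ) (d₁ d₂ : ℚ)
    (hw : ∀ i, 0 < w i) (hd₁ : 0 < d₁) (hd₂ : 0 < d₂)
    (h₀₁ : eval (0 : Fin 5 → ℂ) f₁ = 0) (h₀₂ : eval (0 : Fin 5 → ℂ) f₂ = 0)
    (hwh₁ : WeightedHomog f₁ w d₁) (hwh₂ : WeightedHomog f₂ w d₂)
    (hiso : IsolatedSingOrigin f₁ f₂) :
    ∀ i j : Fin 5, i ≠ j → ∀ d ∈ ({d₁, d₂} : Set ℚ),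
      d ∈ Nset2 (w i) (w j) ∨
      (∃ k : Fin 5, k ≠ i ∧ k ≠ j ∧ d - w k ∈ Nset2 (w i) (w j)) :=
  icis_degree_structure_two_general f₁ f₂ w d₁ d₂ h₀₁ h₀₂ hwh₁ hwh₂ hiso
end

section
/- (Family (1) of the classification list has an isolated singularity at the origin.) Fix an integer n ≥ 2 and let f_1 = z_1^2 + z_2^2 + z_3^2 + z_4^2 + z_5^n and f_2 = z_1^2 + 2 z_2^2 + 3 z_3^2 + 4 z_4^2 + 5 z_5^n in ℂ[z_1,…,z_5]. Then for every x ∈ ℂ^5 such that f_1(x) = 0, f_2(x) = 0, and all 2×2 minors of the Jacobian matrix ((∂f_l/∂z_i)(x))_{l=1,2; i=1,…,5} vanish at x, one has x = 0. -/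
/-!
Both polynomials are weighted sums `∑ cᵢ zᵢ^{kᵢ}` of the same powers with pairwise distinct
weights `cᵢ`, so the `(i, j)` Jacobian minor is `(c_j - c_i) kᵢ kⱼ xᵢ^{kᵢ-1} xⱼ^{kⱼ-1}`.
Its vanishing forces `xᵢ = 0` or `xⱼ = 0` (as all `kᵢ ≥ 2`), so at most one coordinate
`xᵢ` of a singular point is nonzero, and then `f₁(x) = xᵢ^{kᵢ} = 0` kills it too.
-/

open MvPolynomial

namespace MvPolynomial

variable {σ K : Type*} [Fintype σ] [CommRing K]

noncomputable def weightedPowerSum (c : σ → K) (k : σ → ℕ) : MvPolynomial σ K :=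
  ∑ i, C (c i) * X i ^ k i

noncomputable def jacobianMinor (f₁ f₂ : MvPolynomial σ K) (x : σ → K) (i j : σ) : K :=
  eval x (pderiv i f₁) * eval x (pderiv j f₂) - eval x (pderiv j f₁) * eval x (pderiv i f₂)

theorem eval_pderiv_weightedPowerSum (c : σ → K) (k : σ → ℕ) (x : σ → K) (i : σ) :
    eval x (pderiv i (weightedPowerSum c k)) = c i * k i * x i ^ (k i - 1) := by
  rw [weightedPowerSum, map_sum, Finset.sum_eq_single i
    (fun j _ hji => by simp [pderiv_X_of_ne hji]) (by simp)]
  simp [mul_assoc]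

theorem jacobianMinor_weightedPowerSum (c : σ → K) (k : σ → ℕ) (x : σ → K) (i j : σ) :
    jacobianMinor (weightedPowerSum 1 k) (weightedPowerSum c k) x i j =
      (c j - c i) * (k i * x i ^ (k i - 1)) * (k j * x j ^ (k j - 1)) := by
  simp only [jacobianMinor, eval_pderiv_weightedPowerSum, Pi.one_apply]
  ring

theorem eval_weightedPowerSum_of_forall_ne (c : σ → K) {k : σ → ℕ} (hk : ∀ j, k j ≠ 0)
    {x : σ → K} {i : σ} (hx : ∀ j ≠ i, x j = 0) :
    eval x (weightedPowerSum c k) = c i * x i ^ k i := by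
  rw [weightedPowerSum, map_sum,
    Finset.sum_eq_single i (fun j _ hji => by simp [hx j hji, hk j]) (by simp)]
  simp

variable [IsDomain K] [CharZero K]

theorem eq_zero_or_eq_zero_of_jacobianMinor_eq_zero {c : σ → K} (hc : Function.Injective c)
    {k : σ → ℕ} (hk : ∀ i, 2 ≤ k i) {x : σ → K} {i j : σ} (hij : i ≠ j)
    (h : jacobianMinor (weightedPowerSum 1 k) (weightedPowerSum c k) x i j = 0) :
    x i = 0 ∨ x j = 0 := by
  have hk₀ : ∀ l, (k l : K) ≠ 0 := fun l => Nat.cast_ne_zero.mpr (by grind)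
  have hk₁ : ∀ l, k l - 1 ≠ 0 := fun l => by grind
  rw [jacobianMinor_weightedPowerSum] at h
  simpa [sub_eq_zero, hc.ne hij.symm, hk₀, hk₁] using h

theorem eq_zero_of_jacobianMinor_weightedPowerSum_eq_zero {c : σ → K}
    (hc : Function.Injective c) {k : σ → ℕ} (hk : ∀ i, 2 ≤ k i) {x : σ → K}
    (hx : eval x (weightedPowerSum 1 k) = 0)
    (hmin : ∀ i j, jacobianMinor (weightedPowerSum 1 k) (weightedPowerSum c k) x i j = 0) :
    x = 0 := by
  by_contra hne
  obtain ⟨i, hi⟩ := Function.ne_iff.mp hne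
  have hothers : ∀ j ≠ i, x j = 0 := fun j hji =>
    (eq_zero_or_eq_zero_of_jacobianMinor_eq_zero hc hk hji.symm (hmin i j)).resolve_left hi
  have hk₀ : ∀ j, k j ≠ 0 := fun j => by grind
  rw [eval_weightedPowerSum_of_forall_ne 1 hk₀ hothers, Pi.one_apply, one_mul] at hx
  exact hi (pow_eq_zero_iff (hk₀ i) |>.mp hx)

end MvPolynomial

theorem family_one_isolated_singularity_general (n : ℕ) (hn : 2 ≤ n)
    (f₁ f₂ : MvPolynomial (Fin 5) ℂ)
    (hf₁ : f₁ = X 0 ^ 2 + X 1 ^ 2 + X 2 ^ 2 + X 3 ^ 2 + X 4 ^ n)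
    (hf₂ : f₂ = X 0 ^ 2 + C 2 * X 1 ^ 2 + C 3 * X 2 ^ 2 + C 4 * X 3 ^ 2 + C 5 * X 4 ^ n)
    (x : Fin 5 → ℂ) (hx₁ : eval x f₁ = 0)
    (hmin : ∀ i j : Fin 5,
      eval x (pderiv i f₁) * eval x (pderiv j f₂) -
        eval x (pderiv j f₁) * eval x (pderiv i f₂) = 0) :
    x = 0 := by
  set k : Fin 5 → ℕ := ![2, 2, 2, 2, n]
  set c : Fin 5 → ℂ := ![1, 2, 3, 4, 5]
  have hf₁' : f₁ = weightedPowerSum 1 k := by simp [hf₁, weightedPowerSum, Fin.sum_univ_five, k]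
  have hf₂' : f₂ = weightedPowerSum c k := by
    simp [hf₂, weightedPowerSum, Fin.sum_univ_five, k, c]
  have hc : Function.Injective c := by
    intro i j h
    fin_cases i <;> fin_cases j <;> revert h <;> norm_num [c]
  have hk : ∀ i, 2 ≤ k i := by
    intro i
    fin_cases i <;> simp [k, hn]
  subst hf₁' hf₂'
  exact eq_zero_of_jacobianMinor_weightedPowerSum_eq_zero hc hk hx₁ hmin

/-- family (1) of the classification list has an isolated
singularity at the origin. -/
theorem family_one_isolated_singularity (n : ℕ) (hn : 2 ≤ n)
    (f₁ f₂ : MvPolynomial (Fin 5) ℂ)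
    (hf₁ : f₁ = X 0 ^ 2 + X 1 ^ 2 + X 2 ^ 2 + X 3 ^ 2 + X 4 ^ n)
    (hf₂ : f₂ = X 0 ^ 2 + C 2 * X 1 ^ 2 + C 3 * X 2 ^ 2 + C 4 * X 3 ^ 2 + C 5 * X 4 ^ n)
    (x : Fin 5 → ℂ) (hx₁ : eval x f₁ = 0) (hx₂ : eval x f₂ = 0)
    (hmin : ∀ i j : Fin 5,
      eval x (pderiv i f₁) * eval x (pderiv j f₂) -
        eval x (pderiv j f₁) * eval x (pderiv i f₂) = 0) :
    x = 0 :=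
  family_one_isolated_singularity_general n hn f₁ f₂ hf₁ hf₂ x hx₁ hmin
end

section
/- (Family (7) of the classification list has an isolated singularity at the origin.) Fix an integer n ≥ 3 and let f_1 = z_1 z_3 + z_4 z_5 and f_2 = z_1^2 + z_2^2 + z_3^n + z_4^2 + 2 z_5^n in ℂ[z_1,…,z_5]. Then for every x ∈ ℂ^5 such that f_1(x) = 0, f_2(x) = 0, and all 2×2 minors of the Jacobian matrix ((∂f_l/∂z_i)(x))_{l=1,2; i=1,…,5} vanish at x, one has x = 0. -/
/-!
Write `x = (a, b, c, d, e)`. The minors of the column pairs `(1,2)`, `(1,3)`, `(4,5)`, `(1,4)`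
read `b c = 0`, `n c^n = 2 a^2`, `n e^n = d^2` and `c d = a e`. If `a = 0` they force `c = 0`,
then `d e = 0` (from `f₁`) forces `d = e = 0`, and `f₂` gives `b = 0`. If `a ≠ 0`, then
`b = 0` and `c, d, e ≠ 0`; combining `c d = a e` with `f₁` gives `c^2 = -e^2` and
`a^2 = -d^2`, so `f₂` becomes `c^n = -2 e^n`, and squaring yields `(-1)^n = 4`.
-/

open MvPolynomial

section Gradient

variable {R : Type*} [CommSemiring R] (x : Fin 5 → R) (i : Fin 5)

theorem eval_pderiv_family_seven_f₁ :
    eval x (pderiv i (X 0 * X 2 + X 3 * X 4 : MvPolynomial (Fin 5) R)) =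
      ![x 2, 0, x 0, x 4, x 3] i := by
  fin_cases i <;> simp [pderiv_X]

theorem eval_pderiv_family_seven_f₂ (n : ℕ) :
    eval x (pderiv i (X 0 ^ 2 + X 1 ^ 2 + X 2 ^ n + X 3 ^ 2 + C 2 * X 4 ^ n :
      MvPolynomial (Fin 5) R)) =
      ![2 * x 0, 2 * x 1, n * x 2 ^ (n - 1), 2 * x 3, 2 * n * x 4 ^ (n - 1)] i := by
  fin_cases i <;> simp [pderiv_X]
  ring

end Gradient

theorem eq_zero_iff_of_mul_pow_eq_mul_pow {M₀ : Type*} [MonoidWithZero M₀] [NoZeroDivisors M₀]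
    {u v x y : M₀} {m n : ℕ} (hu : u ≠ 0) (hv : v ≠ 0) (hm : m ≠ 0) (hn : n ≠ 0)
    (h : u * x ^ m = v * y ^ n) : x = 0 ↔ y = 0 := by
  rw [← pow_eq_zero_iff hm, ← mul_eq_zero_iff_left hu, h, mul_eq_zero_iff_left hv,
    pow_eq_zero_iff hn]

theorem neg_one_pow_ne_four {R : Type*} [Ring R] [CharZero R] (n : ℕ) : (-1 : R) ^ n ≠ 4 := by
  rcases n.even_or_odd with hn | hn
  · rw [hn.neg_one_pow]; norm_num
  · rw [hn.neg_one_pow]; norm_num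

theorem pow_add_two_mul_pow_ne_zero {R : Type*} [CommRing R] [IsDomain R] [CharZero R]
    {c e : R} (hce : c ^ 2 = -e ^ 2) (he : e ≠ 0) (n : ℕ) : c ^ n + 2 * e ^ n ≠ 0 := by
  intro h
  have hsq : (c ^ n) ^ 2 = 4 * (e ^ n) ^ 2 := by linear_combination (c ^ n - 2 * e ^ n) * h
  have hsq' : (c ^ n) ^ 2 = (-1) ^ n * (e ^ n) ^ 2 := by
    rw [pow_right_comm, hce, neg_pow, pow_right_comm]
  exact neg_one_pow_ne_four n (mul_right_cancel₀ (pow_ne_zero 2 (pow_ne_zero n he))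
    (hsq'.symm.trans hsq))

section FamilySeven

variable {K : Type*} [Field K] [CharZero K] {n : ℕ} {a b c d e : K}

theorem family_seven_minor_equations (hn : n ≠ 0) (x : Fin 5 → K)
    (hmin : ∀ i j : Fin 5,
      eval x (pderiv i (X 0 * X 2 + X 3 * X 4)) *
          eval x (pderiv j (X 0 ^ 2 + X 1 ^ 2 + X 2 ^ n + X 3 ^ 2 + C 2 * X 4 ^ n)) -
        eval x (pderiv j (X 0 * X 2 + X 3 * X 4)) *
          eval x (pderiv i (X 0 ^ 2 + X 1 ^ 2 + X 2 ^ n + X 3 ^ 2 + C 2 * X 4 ^ n)) = 0) :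
    x 1 * x 2 = 0 ∧ n * x 2 ^ n = 2 * x 0 ^ 2 ∧ n * x 4 ^ n = x 3 ^ 2 ∧
      x 2 * x 3 = x 0 * x 4 := by
  simp only [eval_pderiv_family_seven_f₁, eval_pderiv_family_seven_f₂] at hmin
  have h01 := hmin 0 1
  have h02 := hmin 0 2
  have h34 := hmin 3 4
  have h03 := hmin 0 3
  simp only [Fin.isValue, Matrix.cons_val] at h01 h02 h34 h03
  refine ⟨by linear_combination h01 / 2, ?_, ?_, by linear_combination h03 / 2⟩
  · linear_combination h02 - n * mul_pow_sub_one hn (x 2)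
  · linear_combination h34 / 2 - n * mul_pow_sub_one hn (x 4)

theorem family_seven_a_eq_zero (hn : n ≠ 0) (hf₁ : a * c + d * e = 0)
    (hf₂ : a ^ 2 + b ^ 2 + c ^ n + d ^ 2 + 2 * e ^ n = 0) (h01 : b * c = 0)
    (h02 : n * c ^ n = 2 * a ^ 2) (h34 : n * e ^ n = d ^ 2) (h03 : c * d = a * e) : a = 0 := by
  have hn' : (n : K) ≠ 0 := Nat.cast_ne_zero.2 hn
  by_contra ha
  have hc : c ≠ 0 :=
    mt (eq_zero_iff_of_mul_pow_eq_mul_pow hn' two_ne_zero hn two_ne_zero h02).1 ha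
  have hb : b = 0 := (mul_eq_zero.1 h01).resolve_right hc
  have hed : e = 0 ↔ d = 0 := eq_zero_iff_of_mul_pow_eq_mul_pow hn' one_ne_zero hn two_ne_zero
    (h34.trans (one_mul _).symm)
  have hd : d ≠ 0 := fun hd => mul_ne_zero ha hc (by simpa [hd] using hf₁)
  have he : e ≠ 0 := mt hed.1 hd
  have hce : c ^ 2 = -e ^ 2 := by
    have : d * (c ^ 2 + e ^ 2) = 0 := by linear_combination c * h03 + e * hf₁
    linear_combination (mul_eq_zero.1 this).resolve_left hd
  have had : a ^ 2 = -d ^ 2 := by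
    have : e ^ 2 * (a ^ 2 + d ^ 2) = 0 := by
      linear_combination d ^ 2 * hce - (a * e + c * d) * h03
    linear_combination (mul_eq_zero.1 this).resolve_left (pow_ne_zero 2 he)
  exact pow_add_two_mul_pow_ne_zero hce he n (by linear_combination hf₂ - had - b * hb)

theorem family_seven_eq_zero_of_a_eq_zero (hn : n ≠ 0) (ha : a = 0) (hf₁ : a * c + d * e = 0)
    (hf₂ : a ^ 2 + b ^ 2 + c ^ n + d ^ 2 + 2 * e ^ n = 0)
    (h02 : n * c ^ n = 2 * a ^ 2) (h34 : n * e ^ n = d ^ 2) :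
    b = 0 ∧ c = 0 ∧ d = 0 ∧ e = 0 := by
  have hn' : (n : K) ≠ 0 := Nat.cast_ne_zero.2 hn
  have hc : c = 0 :=
    (eq_zero_iff_of_mul_pow_eq_mul_pow hn' two_ne_zero hn two_ne_zero h02).2 ha
  have hed : e = 0 ↔ d = 0 := eq_zero_iff_of_mul_pow_eq_mul_pow hn' one_ne_zero hn two_ne_zero
    (h34.trans (one_mul _).symm)
  have hd : d = 0 := by
    rcases mul_eq_zero.1 (by simpa [ha] using hf₁ : d * e = 0) with hd | he
    exacts [hd, hed.1 he]
  have hb : b = 0 := by simpa [ha, hc, hd, hed.2 hd, hn] using hf₂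
  exact ⟨hb, hc, hd, hed.2 hd⟩

end FamilySeven

/-- family (7) of the classification list has an isolated
singularity at the origin. -/
theorem family_seven_isolated_singularity (n : ℕ) (hn : 3 ≤ n)
    (f₁ f₂ : MvPolynomial (Fin 5) ℂ)
    (hf₁ : f₁ = X 0 * X 2 + X 3 * X 4)
    (hf₂ : f₂ = X 0 ^ 2 + X 1 ^ 2 + X 2 ^ n + X 3 ^ 2 + C 2 * X 4 ^ n)
    (x : Fin 5 → ℂ) (hx₁ : eval x f₁ = 0) (hx₂ : eval x f₂ = 0)
    (hmin : ∀ i j : Fin 5,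
      eval x (pderiv i f₁) * eval x (pderiv j f₂) -
        eval x (pderiv j f₁) * eval x (pderiv i f₂) = 0) :
    x = 0 := by
  subst hf₁ hf₂
  have hn₀ : n ≠ 0 := by omega
  obtain ⟨h01, h02, h34, h03⟩ := family_seven_minor_equations hn₀ x hmin
  simp only [map_add, map_mul, map_pow, eval_X, eval_C] at hx₁ hx₂
  have ha := family_seven_a_eq_zero hn₀ hx₁ hx₂ h01 h02 h34 h03
  obtain ⟨hb, hc, hd, he⟩ := family_seven_eq_zero_of_a_eq_zero hn₀ ha hx₁ hx₂ h02 h34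
  ext i
  fin_cases i <;> assumption
end

section
/- (Family (113) of the classification list has an isolated singularity at the origin.) Fix integers n_2 ≥ 3 and n_5 with 2 ≤ n_5 ≤ n_2, and let f_1 = z_1 z_2 + z_4 z_5 and f_2 = z_1 z_4 + z_3^2 + z_2^{n_2} + z_5^{n_5} in ℂ[z_1,…,z_5]. Then for every x ∈ ℂ^5 such that f_1(x) = 0, f_2(x) = 0, and all 2×2 minors of the Jacobian matrix ((∂f_l/∂z_i)(x))_{l=1,2; i=1,…,5} vanish at x, one has x = 0. -/
/-!
With coordinates `x 0, …, x 4`, the gradients are `∇f₁ = (x₁, x₀, 0, x₄, x₃)` and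
`∇f₂ = (x₃, n₂ x₁^(n₂-1), 2 x₂, x₀, n₅ x₄^(n₅-1))`. The `(0,3)`-minor is `x₀x₁ - x₃x₄`, so
together with `f₁ = 0` it gives `x₀x₁ = 0`; then the minors `(0,1)`, `(0,4)`, `(3,4)`, `(1,3)`
force `x₁`, `x₃`, `x₄`, `x₀` to vanish in turn, and `f₂ = 0` leaves `x₂² = 0`.
-/

open MvPolynomial

section Gradient

variable {R : Type*} [CommRing R]

theorem eval_pderiv_X0_mul_X1_add_X3_mul_X4 (x : Fin 5 → R) (i : Fin 5) :
    eval x (pderiv i (X 0 * X 1 + X 3 * X 4 : MvPolynomial (Fin 5) R)) =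
      ![x 1, x 0, 0, x 4, x 3] i := by
  fin_cases i <;> simp [pderiv_X]

theorem eval_pderiv_X0_mul_X3_add_X2_sq_add_X1_pow_add_X4_pow (n₂ n₅ : ℕ) (x : Fin 5 → R)
    (i : Fin 5) :
    eval x (pderiv i (X 0 * X 3 + X 2 ^ 2 + X 1 ^ n₂ + X 4 ^ n₅ : MvPolynomial (Fin 5) R)) =
      ![x 3, n₂ * x 1 ^ (n₂ - 1), 2 * x 2, x 0, n₅ * x 4 ^ (n₅ - 1)] i := by
  fin_cases i <;> simp [pderiv_X, mul_comm]

end Gradient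

section Field

variable {K : Type*} [Field K] [CharZero K]

theorem eq_zero_of_natCast_mul_pow_eq_zero {n : ℕ} (hn : n ≠ 0) {y : K}
    (h : n * y ^ n = 0) : y = 0 := by
  simpa [hn] using h

theorem eq_zero_of_family113_equations {n₂ n₅ : ℕ} (hn₂ : n₂ ≠ 0) (hn₅ : n₅ ≠ 0)
    (x : Fin 5 → K) (hf₁ : x 0 * x 1 + x 3 * x 4 = 0)
    (hf₂ : x 0 * x 3 + x 2 ^ 2 + x 1 ^ n₂ + x 4 ^ n₅ = 0)
    (hmin : ∀ i j : Fin 5,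
      ![x 1, x 0, 0, x 4, x 3] i *
          ![x 3, n₂ * x 1 ^ (n₂ - 1), 2 * x 2, x 0, n₅ * x 4 ^ (n₅ - 1)] j -
        ![x 1, x 0, 0, x 4, x 3] j *
          ![x 3, n₂ * x 1 ^ (n₂ - 1), 2 * x 2, x 0, n₅ * x 4 ^ (n₅ - 1)] i = 0) :
    x = 0 := by
  have h03 := hmin 0 3
  have h01 := hmin 0 1
  have h04 := hmin 0 4
  have h34 := hmin 3 4
  have h13 := hmin 1 3
  simp only [Matrix.cons_val] at h03 h01 h04 h34 h13
  have pow₂ : x 1 * x 1 ^ (n₂ - 1) = x 1 ^ n₂ := by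
    rw [← pow_succ', Nat.sub_add_cancel (Nat.one_le_iff_ne_zero.mpr hn₂)]
  have pow₅ : x 4 * x 4 ^ (n₅ - 1) = x 4 ^ n₅ := by
    rw [← pow_succ', Nat.sub_add_cancel (Nat.one_le_iff_ne_zero.mpr hn₅)]
  have h₀₁ : x 0 * x 1 = 0 := by linear_combination hf₁ / 2 + h03 / 2
  have hx₁ : x 1 = 0 := by
    rcases mul_eq_zero.mp h₀₁ with hx₀ | hx₁
    · refine eq_zero_of_natCast_mul_pow_eq_zero hn₂ ?_
      linear_combination h01 + x 3 * hx₀ - n₂ * pow₂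
    · exact hx₁
  have hx₃ : x 3 = 0 := by
    refine mul_self_eq_zero.mp ?_
    linear_combination -h04 + (n₅ * x 4 ^ (n₅ - 1)) * hx₁
  have hx₄ : x 4 = 0 := by
    refine eq_zero_of_natCast_mul_pow_eq_zero hn₅ ?_
    linear_combination h34 + x 0 * hx₃ - n₅ * pow₅
  have hx₀ : x 0 = 0 := by
    refine mul_self_eq_zero.mp ?_
    linear_combination h13 + (n₂ * x 1 ^ (n₂ - 1)) * hx₄
  have hx₂ : x 2 = 0 := by
    refine (pow_eq_zero_iff two_ne_zero).mp ?_
    simpa [hx₀, hx₁, hx₄, hn₂, hn₅] using hf₂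
  funext i
  fin_cases i <;> simp [hx₀, hx₁, hx₂, hx₃, hx₄]

end Field

theorem family_113_isolated_singularity_general (n₂ n₅ : ℕ) (hn₂ : 3 ≤ n₂)
    (hn₅ : 2 ≤ n₅)
    (f₁ f₂ : MvPolynomial (Fin 5) ℂ)
    (hf₁ : f₁ = X 0 * X 1 + X 3 * X 4)
    (hf₂ : f₂ = X 0 * X 3 + X 2 ^ 2 + X 1 ^ n₂ + X 4 ^ n₅)
    (x : Fin 5 → ℂ) (hx₁ : eval x f₁ = 0) (hx₂ : eval x f₂ = 0)
    (hmin : ∀ i j : Fin 5,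
      eval x (pderiv i f₁) * eval x (pderiv j f₂) -
        eval x (pderiv j f₁) * eval x (pderiv i f₂) = 0) :
    x = 0 := by
  subst hf₁ hf₂
  simp only [eval_pderiv_X0_mul_X1_add_X3_mul_X4,
    eval_pderiv_X0_mul_X3_add_X2_sq_add_X1_pow_add_X4_pow] at hmin
  simp only [map_add, map_mul, map_pow, eval_X] at hx₁ hx₂
  exact eq_zero_of_family113_equations (by omega) (by omega) x hx₁ hx₂ hmin

/-- family (113) of the classification list has an isolated
singularity at the origin. -/
theorem family_113_isolated_singularity (n₂ n₅ : ℕ) (hn₂ : 3 ≤ n₂)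
    (hn₅ : 2 ≤ n₅) (hle : n₅ ≤ n₂)
    (f₁ f₂ : MvPolynomial (Fin 5) ℂ)
    (hf₁ : f₁ = X 0 * X 1 + X 3 * X 4)
    (hf₂ : f₂ = X 0 * X 3 + X 2 ^ 2 + X 1 ^ n₂ + X 4 ^ n₅)
    (x : Fin 5 → ℂ) (hx₁ : eval x f₁ = 0) (hx₂ : eval x f₂ = 0)
    (hmin : ∀ i j : Fin 5,
      eval x (pderiv i f₁) * eval x (pderiv j f₂) -
        eval x (pderiv j f₁) * eval x (pderiv i f₂) = 0) :
    x = 0 :=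
  family_113_isolated_singularity_general n₂ n₅ hn₂ hn₅ f₁ f₂ hf₁ hf₂ x hx₁ hx₂ hmin
end
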